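/- arXiv:2508.13059 — 5 statements merged into one kernel-verified Lean document; each statement's English description precedes it below -/
import Mathlib

section
/- Let a,b,c be positive integers, d = gcd(a,b,c) and m = gcd(bc,ac,ab). Then the quotient of ℤ³ by the subgroup M generated by (a,-b,0), (0,b,-c), (-a,0,c) is isomorphic to ℤ ⊕ ℤ/d ⊕ ℤ/(m/d). -/
private def unimod (u v w x : ℤ) (h : u * x - v * w = 1) : (ℤ × ℤ) ≃+ ℤ × ℤ where
  toFun p := (u * p.1 + v * p.2, w * p.1 + x * p.2)
  invFun p := (x * p.1 - v * p.2, -w * p.1 + u * p.2)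
  left_inv p := by
    obtain ⟨p1, p2⟩ := p
    simp only [Prod.mk.injEq]
    exact ⟨by linear_combination p1 * h, by linear_combination p2 * h⟩
  right_inv p := by
    obtain ⟨p1, p2⟩ := p
    simp only [Prod.mk.injEq]
    exact ⟨by linear_combination p1 * h, by linear_combination p2 * h⟩
  map_add' p q := by
    simp only [Prod.fst_add, Prod.snd_add, Prod.mk_add_mk, Prod.mk.injEq]
    constructor <;> ring

@[simp] private lemma unimod_apply (u v w x : ℤ) (h) (p : ℤ × ℤ) :
    unimod u v w x h p = (u * p.1 + v * p.2, w * p.1 + x * p.2) := rfl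

private def onFst (h : (ℤ × ℤ) ≃+ ℤ × ℤ) : (ℤ × ℤ × ℤ) ≃+ ℤ × ℤ × ℤ :=
  (AddEquiv.prodAssoc).symm.trans ((AddEquiv.prodCongr h (AddEquiv.refl ℤ)).trans AddEquiv.prodAssoc)

private def onLast (h : (ℤ × ℤ) ≃+ ℤ × ℤ) : (ℤ × ℤ × ℤ) ≃+ ℤ × ℤ × ℤ :=
  AddEquiv.prodCongr (AddEquiv.refl ℤ) h

@[simp] private lemma onFst_apply (h : (ℤ × ℤ) ≃+ ℤ × ℤ) (p : ℤ × ℤ × ℤ) :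
    onFst h p = ((h (p.1, p.2.1)).1, (h (p.1, p.2.1)).2, p.2.2) := rfl

@[simp] private lemma onLast_apply (h : (ℤ × ℤ) ≃+ ℤ × ℤ) (p : ℤ × ℤ × ℤ) :
    onLast h p = (p.1, h p.2) := rfl

private def rot : (ℤ × ℤ × ℤ) ≃+ ℤ × ℤ × ℤ where
  toFun p := (p.2.2, p.1, p.2.1)
  invFun p := (p.2.1, p.2.2, p.1)
  left_inv _ := rfl
  right_inv _ := rfl
  map_add' _ _ := rfl

@[simp] private lemma rot_apply (p : ℤ × ℤ × ℤ) : rot p = (p.2.2, p.1, p.2.1) := rfl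

private theorem aux (a b c g e d md a₁ b₁ α γ g₂ e₂ u v p q s t : ℤ)
    (h1 : u * a + v * b = g)
    (h2 : p * (a * b₁) + q * c = e)
    (h4 : a = g * a₁) (h5 : b = g * b₁)
    (h6 : a * b₁ = e * α) (h7 : c = e * γ)
    (h8 : g = d * g₂) (h9 : e = d * e₂)
    (h10 : md = g₂ * e) (h10' : md = g * e₂)
    (hdet1 : u * a₁ + v * b₁ = 1)
    (hdet2 : p * α + q * γ = 1)
    (hdet3 : s * g₂ + t * e₂ = 1) :
    Nonempty ((ℤ × ℤ × ℤ) ⧸ AddSubgroup.closure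
        {((a : ℤ), -b, (0:ℤ)), ((0:ℤ), b, -c), (-a, (0:ℤ), c)} ≃+
      (ℤ × ℤ × ℤ) ⧸ AddSubgroup.closure {((0:ℤ), d, (0:ℤ)), ((0:ℤ), (0:ℤ), md)}) := by
  set E : (ℤ × ℤ × ℤ) ≃+ ℤ × ℤ × ℤ :=
    ((onFst (unimod u (-v) b₁ a₁ (by linear_combination hdet1))).trans
      (onLast (unimod p (-q) γ α (by linear_combination hdet2)))).trans
      ((onFst (unimod s t (-e₂) g₂ (by linear_combination hdet3))).trans rot) with hEdef
  have hv1 : E ((a : ℤ), -b, 0) = ((0:ℤ), d * (s * g₂), md * (-1)) := by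
    simp only [hEdef, AddEquiv.trans_apply, onFst_apply, onLast_apply, unimod_apply, rot_apply,
      Prod.mk.injEq]
    refine ⟨?_, ?_, ?_⟩
    · linear_combination γ * b₁ * h4 - γ * a₁ * h5
    · linear_combination s * h1 + t * p * b₁ * h4 - t * p * a₁ * h5 + s * h8
    · linear_combination (-e₂) * h1 + g₂ * p * b₁ * h4 - g₂ * p * a₁ * h5 + h10'
  have hv2 : E ((0 : ℤ), b, -c) = ((0:ℤ), d * (t * e₂ - s * g₂ * (v * b₁)), md * (v * b₁ + 1)) := by
    simp only [hEdef, AddEquiv.trans_apply, onFst_apply, onLast_apply, unimod_apply, rot_apply,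
      Prod.mk.injEq]
    refine ⟨?_, ?_, ?_⟩
    · linear_combination γ * a₁ * h5 - γ * b₁ * h4 + γ * h6 - α * h7
    · linear_combination t * p * a₁ * h5 - t * p * b₁ * h4 + t * h2 + t * h9 - s * v * h5 - s * v * b₁ * h8
    · linear_combination g₂ * p * a₁ * h5 - g₂ * p * b₁ * h4 + g₂ * h2 + e₂ * v * h5 - h10 - v * b₁ * h10'
  have hv3 : E ((-a : ℤ), (0:ℤ), c)
      = -((0:ℤ), d * (s * g₂), md * (-1))
        - ((0:ℤ), d * (t * e₂ - s * g₂ * (v * b₁)), md * (v * b₁ + 1)) := by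
    have hveq : ((-a : ℤ), (0:ℤ), (c:ℤ)) = -(((a:ℤ), -b, (0:ℤ))) - (((0:ℤ), b, -c)) := by
      simp [Prod.ext_iff]
    rw [hveq, map_sub, map_neg, hv1, hv2]
  have hmemT : ∀ k l : ℤ, ((0:ℤ), d * k, md * l) ∈
      AddSubgroup.closure {((0:ℤ), d, (0:ℤ)), ((0:ℤ), (0:ℤ), md)} := by
    intro k l
    have hrw : ((0:ℤ), d * k, md * l)
        = k • ((0:ℤ), d, (0:ℤ)) + l • ((0:ℤ), (0:ℤ), md) := by
      simp [Prod.ext_iff, smul_eq_mul, mul_comm]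
    rw [hrw]
    exact add_mem (zsmul_mem (AddSubgroup.subset_closure (by simp)) k)
      (zsmul_mem (AddSubgroup.subset_closure (by simp)) l)
  have hmap : (AddSubgroup.closure
        {((a : ℤ), -b, (0:ℤ)), ((0:ℤ), b, -c), (-a, (0:ℤ), c)}).map E.toAddMonoidHom
      = AddSubgroup.closure {((0:ℤ), d, (0:ℤ)), ((0:ℤ), (0:ℤ), md)} := by
    rw [AddMonoidHom.map_closure]
    rw [Set.image_insert_eq, Set.image_insert_eq, Set.image_singleton]
    rw [show E.toAddMonoidHom ((a : ℤ), -b, (0:ℤ)) = E ((a : ℤ), -b, (0:ℤ)) from rfl, hv1]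
    rw [show E.toAddMonoidHom ((0 : ℤ), b, -c) = E ((0 : ℤ), b, -c) from rfl, hv2]
    rw [show E.toAddMonoidHom ((-a : ℤ), (0:ℤ), c) = E ((-a : ℤ), (0:ℤ), c) from rfl, hv3]
    apply le_antisymm
    · rw [AddSubgroup.closure_le]
      rintro w hw
      simp only [Set.mem_insert_iff, Set.mem_singleton_iff] at hw
      rcases hw with rfl | rfl | rfl
      · exact hmemT _ _
      · exact hmemT _ _
      · exact sub_mem (neg_mem (hmemT _ _)) (hmemT _ _)
    · rw [AddSubgroup.closure_le]
      rintro w hw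
      simp only [Set.mem_insert_iff, Set.mem_singleton_iff] at hw
      have hX : ((0:ℤ), d * (s * g₂), md * (-1)) ∈ AddSubgroup.closure
          {((0:ℤ), d * (s * g₂), md * (-1)),
            ((0:ℤ), d * (t * e₂ - s * g₂ * (v * b₁)), md * (v * b₁ + 1)),
            -((0:ℤ), d * (s * g₂), md * (-1))
              - ((0:ℤ), d * (t * e₂ - s * g₂ * (v * b₁)), md * (v * b₁ + 1))} :=
        AddSubgroup.subset_closure (by simp)
      have hY : ((0:ℤ), d * (t * e₂ - s * g₂ * (v * b₁)), md * (v * b₁ + 1)) ∈ AddSubgroup.closure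
          {((0:ℤ), d * (s * g₂), md * (-1)),
            ((0:ℤ), d * (t * e₂ - s * g₂ * (v * b₁)), md * (v * b₁ + 1)),
            -((0:ℤ), d * (s * g₂), md * (-1))
              - ((0:ℤ), d * (t * e₂ - s * g₂ * (v * b₁)), md * (v * b₁ + 1))} :=
        AddSubgroup.subset_closure (by simp)
      rcases hw with rfl | rfl
      · have hrw : ((0:ℤ), d, (0:ℤ))
            = (v * b₁ + 1) • ((0:ℤ), d * (s * g₂), md * (-1))
              + (1 : ℤ) • ((0:ℤ), d * (t * e₂ - s * g₂ * (v * b₁)), md * (v * b₁ + 1)) := by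
          simp only [Prod.ext_iff, Prod.fst_add, Prod.snd_add, Prod.smul_fst, Prod.smul_snd,
            smul_eq_mul]
          refine ⟨by ring, by linear_combination (-d) * hdet3, by ring⟩
        rw [hrw]
        exact add_mem (zsmul_mem hX _) (zsmul_mem hY _)
      · have hrw : ((0:ℤ), (0:ℤ), md)
            = (s * g₂ * (v * b₁ + 1) - 1) • ((0:ℤ), d * (s * g₂), md * (-1))
              + (s * g₂) • ((0:ℤ), d * (t * e₂ - s * g₂ * (v * b₁)), md * (v * b₁ + 1)) := by
          simp only [Prod.ext_iff, Prod.fst_add, Prod.snd_add, Prod.smul_fst, Prod.smul_snd,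
            smul_eq_mul]
          refine ⟨by ring, by linear_combination (-(d * s * g₂)) * hdet3, by ring⟩
        rw [hrw]
        exact add_mem (zsmul_mem hX _) (zsmul_mem hY _)
  exact ⟨QuotientAddGroup.congr _ _ E hmap⟩

private noncomputable def quotProd {G H : Type*} [AddCommGroup G] [AddCommGroup H]
    (N : AddSubgroup G) (K : AddSubgroup H) :
    (G × H) ⧸ (N.prod K) ≃+ (G ⧸ N) × (H ⧸ K) :=
  (QuotientAddGroup.quotientAddEquivOfEq (by
      ext ⟨x, y⟩
      simp [AddSubgroup.mem_prod, AddMonoidHom.mem_ker, Prod.ext_iff,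
        QuotientAddGroup.eq_zero_iff] : N.prod K
        = ((QuotientAddGroup.mk' N).prodMap (QuotientAddGroup.mk' K)).ker)).trans
    (QuotientAddGroup.quotientKerEquivOfSurjective _
      ((QuotientAddGroup.mk'_surjective N).prodMap (QuotientAddGroup.mk'_surjective K)))

/-- Let `a,b,c` be positive integers, `d = gcd(a,b,c)`, `m = gcd(bc,ac,ab)`. Then
`ℤ³ / ⟨(a,-b,0), (0,b,-c), (-a,0,c)⟩ ≅ ℤ ⊕ ℤ/d ⊕ ℤ/(m/d)`. -/
theorem quotient_by_M_iso (a b c : ℕ) (ha : 0 < a) (hb : 0 < b) (hc : 0 < c) :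
    Nonempty ((ℤ × ℤ × ℤ) ⧸ AddSubgroup.closure
        {((a : ℤ), -(b : ℤ), (0 : ℤ)), ((0 : ℤ), (b : ℤ), -(c : ℤ)),
          (-(a : ℤ), (0 : ℤ), (c : ℤ))} ≃+
      ℤ × ZMod (Nat.gcd a (Nat.gcd b c)) ×
        ZMod (Nat.gcd (b * c) (Nat.gcd (a * c) (a * b)) / Nat.gcd a (Nat.gcd b c))) := by
  set g := Nat.gcd a b with hgdef
  have hg0 : 0 < g := Nat.gcd_pos_of_pos_left _ ha
  set b₁ := b / g with hb₁def
  set a₁ := a / g with ha₁def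
  set e := Nat.gcd (a * b₁) c with hedef
  have he0 : 0 < e := Nat.gcd_pos_of_pos_right _ hc
  set d := Nat.gcd g e with hddef
  have hd0 : 0 < d := Nat.gcd_pos_of_pos_left _ hg0
  set α := (a * b₁) / e with hαdef
  set γ := c / e with hγdef
  set g₂ := g / d with hg₂def
  set e₂ := e / d with he₂def
  set md := g₂ * e with hmddef
  have ha4 : a = g * a₁ := (Nat.mul_div_cancel' (Nat.gcd_dvd_left a b)).symm
  have hb5 : b = g * b₁ := (Nat.mul_div_cancel' (Nat.gcd_dvd_right a b)).symm
  have h6 : a * b₁ = e * α := (Nat.mul_div_cancel' (Nat.gcd_dvd_left _ _)).symm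
  have h7 : c = e * γ := (Nat.mul_div_cancel' (Nat.gcd_dvd_right _ _)).symm
  have h8 : g = d * g₂ := (Nat.mul_div_cancel' (Nat.gcd_dvd_left _ _)).symm
  have h9 : e = d * e₂ := (Nat.mul_div_cancel' (Nat.gcd_dvd_right _ _)).symm
  have h10' : md = g * e₂ := by
    apply Nat.eq_of_mul_eq_mul_left hd0
    calc d * md = (d * g₂) * e := by rw [hmddef]; ring
    _ = g * (d * e₂) := by rw [← h8, ← h9]
    _ = d * (g * e₂) := by ring
  have hd_eq : Nat.gcd a (Nat.gcd b c) = d := by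
    apply Nat.dvd_antisymm
    · apply Nat.dvd_gcd
      · exact Nat.dvd_gcd (Nat.gcd_dvd_left a _)
          ((Nat.gcd_dvd_right a _).trans (Nat.gcd_dvd_left b c))
      · exact Nat.dvd_gcd
          (((Nat.gcd_dvd_left a _)).trans (dvd_mul_right a b₁))
          ((Nat.gcd_dvd_right a _).trans (Nat.gcd_dvd_right b c))
    · apply Nat.dvd_gcd
      · exact (Nat.gcd_dvd_left g e).trans (Nat.gcd_dvd_left a b)
      · exact Nat.dvd_gcd ((Nat.gcd_dvd_left g e).trans (Nat.gcd_dvd_right a b))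
          ((Nat.gcd_dvd_right g e).trans (Nat.gcd_dvd_right _ c))
  have hm_eq : Nat.gcd (b * c) (Nat.gcd (a * c) (a * b)) = g * e := by
    have h1 : g * e = Nat.gcd (g * (a * b₁)) (g * c) := Nat.gcd_mul_left g _ _ |>.symm
    have h2 : g * (a * b₁) = a * b := by rw [hb5]; ring
    have h3 : g * c = Nat.gcd (a * c) (b * c) := by
      rw [← Nat.gcd_mul_right]
    rw [h1, h2, h3]
    apply Nat.dvd_antisymm
    · apply Nat.dvd_gcd
      · exact (Nat.gcd_dvd_right _ _).trans (Nat.gcd_dvd_right _ _)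
      · exact Nat.dvd_gcd ((Nat.gcd_dvd_right _ _).trans (Nat.gcd_dvd_left _ _))
          (Nat.gcd_dvd_left _ _)
    · apply Nat.dvd_gcd
      · exact (Nat.gcd_dvd_right _ _).trans (Nat.gcd_dvd_right _ _)
      · exact Nat.dvd_gcd ((Nat.gcd_dvd_right _ _).trans (Nat.gcd_dvd_left _ _))
          (Nat.gcd_dvd_left _ _)
  have hmd_eq : Nat.gcd (b * c) (Nat.gcd (a * c) (a * b)) / Nat.gcd a (Nat.gcd b c) = md := by
    rw [hm_eq, hd_eq, show g * e = d * md by rw [hmddef, h8]; ring, Nat.mul_div_cancel_left _ hd0]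
  rw [hmd_eq, hd_eq]
  -- cast versions
  have hgZ : ((g : ℤ)) ≠ 0 := by exact_mod_cast hg0.ne'
  have heZ : ((e : ℤ)) ≠ 0 := by exact_mod_cast he0.ne'
  have hdZ : ((d : ℤ)) ≠ 0 := by exact_mod_cast hd0.ne'
  have ha4' : (a : ℤ) = (g : ℤ) * a₁ := by exact_mod_cast ha4
  have hb5' : (b : ℤ) = (g : ℤ) * b₁ := by exact_mod_cast hb5
  have h6' : (a : ℤ) * b₁ = (e : ℤ) * α := by exact_mod_cast h6
  have h7' : (c : ℤ) = (e : ℤ) * γ := by exact_mod_cast h7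
  have h8' : (g : ℤ) = (d : ℤ) * g₂ := by exact_mod_cast h8
  have h9' : (e : ℤ) = (d : ℤ) * e₂ := by exact_mod_cast h9
  have h10c : (md : ℤ) = (g₂ : ℤ) * e := by exact_mod_cast hmddef
  have h10c' : (md : ℤ) = (g : ℤ) * e₂ := by exact_mod_cast h10'
  set u := Nat.gcdA a b with hudef
  set v := Nat.gcdB a b with hvdef
  set p := Nat.gcdA (a * b₁) c with hpdef
  set q := Nat.gcdB (a * b₁) c with hqdef
  set s := Nat.gcdA g e with hsdef
  set t := Nat.gcdB g e with htdef
  have h1' : u * (a : ℤ) + v * (b : ℤ) = (g : ℤ) := by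
    have h := Nat.gcd_eq_gcd_ab a b
    rw [← hgdef] at h
    linear_combination -h
  have h2' : p * ((a : ℤ) * b₁) + q * (c : ℤ) = (e : ℤ) := by
    have h := Nat.gcd_eq_gcd_ab (a * b₁) c
    rw [← hedef] at h
    push_cast at h
    linear_combination -h
  have h3' : s * (g : ℤ) + t * (e : ℤ) = (d : ℤ) := by
    have h := Nat.gcd_eq_gcd_ab g e
    rw [← hddef] at h
    linear_combination -h
  have hdet1 : u * (a₁ : ℤ) + v * b₁ = 1 := by
    apply mul_left_cancel₀ hgZ
    linear_combination h1' - u * ha4' - v * hb5'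
  have hdet2 : p * (α : ℤ) + q * γ = 1 := by
    apply mul_left_cancel₀ heZ
    linear_combination h2' - p * h6' - q * h7'
  have hdet3 : s * (g₂ : ℤ) + t * e₂ = 1 := by
    apply mul_left_cancel₀ hdZ
    linear_combination h3' - s * h8' - t * h9'
  obtain ⟨E1⟩ := aux (a : ℤ) b c g e d md a₁ b₁ α γ g₂ e₂ u v p q s t
    h1' h2' ha4' hb5' h6' h7' h8' h9' h10c h10c' hdet1 hdet2 hdet3
  have hTeq : AddSubgroup.closure {((0:ℤ), (d : ℤ), (0:ℤ)), ((0:ℤ), (0:ℤ), (md : ℤ))}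
      = AddSubgroup.prod ⊥ ((AddSubgroup.zmultiples (d : ℤ)).prod
          (AddSubgroup.zmultiples (md : ℤ))) := by
    apply le_antisymm
    · rw [AddSubgroup.closure_le]
      rintro w hw
      simp only [Set.mem_insert_iff, Set.mem_singleton_iff] at hw
      rcases hw with rfl | rfl <;>
        simp [AddSubgroup.mem_prod, Int.mem_zmultiples_iff]
    · rintro ⟨x, y, z⟩ hw
      simp only [AddSubgroup.mem_prod, AddSubgroup.mem_bot, Int.mem_zmultiples_iff] at hw
      obtain ⟨rfl, ⟨k, rfl⟩, ⟨l, rfl⟩⟩ := hw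
      have hrw : ((0:ℤ), (d : ℤ) * k, (md : ℤ) * l)
          = k • ((0:ℤ), (d : ℤ), (0:ℤ)) + l • ((0:ℤ), (0:ℤ), (md : ℤ)) := by
        simp [Prod.ext_iff, mul_comm]
      rw [hrw]
      exact add_mem (zsmul_mem (AddSubgroup.subset_closure (by simp)) _)
        (zsmul_mem (AddSubgroup.subset_closure (by simp)) _)
  exact ⟨E1.trans ((QuotientAddGroup.quotientAddEquivOfEq hTeq).trans
    ((quotProd _ _).trans (AddEquiv.prodCongr QuotientAddGroup.quotientBot
      ((quotProd _ _).trans (AddEquiv.prodCongr (Int.quotientZMultiplesNatEquivZMod d)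
        (Int.quotientZMultiplesNatEquivZMod md))))))⟩
end

section
/- Let a,b,c be positive integers, d = gcd(a,b,c) and m = gcd(bc,ac,ab). Then the quotient of ℤ³ by the subgroup J generated by (a,0,0), (0,b,0), (0,0,c), (1,1,1) is isomorphic to ℤ/d ⊕ ℤ/(m/d). -/
/-!
Subtracting the last coordinate identifies `ℤ³ ⧸ J` with `ℤ² ⧸ L`, where `L` is spanned by
`(a, 0)`, `(0, b)` and `(-c, -c)`; unimodular row operations put `L` in upper triangular form with
rows `(gcd(a, c), τ c)` and `(0, gcd(lcm(a, c), b))` for some integer `τ`. Since `gcd(a, c)` divides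
`c` and `lcm(a, c)`, the gcd of these three entries is `gcd(a, b, c)`, and the product of the
diagonal entries is `gcd(ac, b · gcd(a, c)) = gcd(bc, ac, ab)`.

For a lattice with rows `(p, q)`, `(0, t)` the quotient is `ℤ/g × ℤ/(pt/g)` with `g = gcd(p, q, t)`,
by a Euclidean descent on `p`: a row operation and a shear change `q` freely modulo `gcd(p, t)`,
so that either `p ∣ q, t` (and the lattice is `pℤ × tℤ`) or `0 < q < p`. In the latter case
swapping the coordinates and reducing the rows gives a triangular lattice with first entry
`gcd(t, q) < p` and the same `g` and `pt`.
-/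

namespace AddSubgroup

variable {G : Type*}

theorem closure_insert_insert_congr [AddGroup G] {x y x' y' : G} (S : Set G)
    (h : closure {x, y} = closure {x', y'}) :
    closure (insert x (insert y S)) = closure (insert x' (insert y' S)) := by
  have hunion (u v : G) : insert u (insert v S) = {u, v} ∪ S := by
    rw [Set.insert_union, Set.singleton_union]
  rw [hunion, hunion, closure_union, closure_union, h]

variable [AddCommGroup G]

theorem closure_pair_eq_of_det_eq_one (u v : G) {α β γ δ : ℤ} (h : α * δ - β * γ = 1) :
    closure {α • u + β • v, γ • u + δ • v} = closure {u, v} := by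
  apply le_antisymm <;>
    simp only [closure_le, Set.insert_subset_iff, Set.singleton_subset_iff, SetLike.mem_coe,
      mem_closure_pair]
  · exact ⟨⟨α, β, rfl⟩, γ, δ, rfl⟩
  · refine ⟨⟨δ, -β, ?_⟩, -γ, α, ?_⟩
    · linear_combination (norm := module) h • u
    · linear_combination (norm := module) h • v

theorem closure_pair_zsmul (s t : ℤ) (y : G) :
    closure {s • y, t • y} = closure {(Int.gcd s t : ℤ) • y} := by
  apply le_antisymm
  · obtain ⟨s', hs'⟩ := Int.gcd_dvd_left s t
    obtain ⟨t', ht'⟩ := Int.gcd_dvd_right s t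
    simp only [closure_le, Set.insert_subset_iff, Set.singleton_subset_iff, SetLike.mem_coe,
      ← zmultiples_eq_closure, mem_zmultiples_iff]
    exact ⟨⟨s', by rw [smul_smul, mul_comm, ← hs']⟩, t', by rw [smul_smul, mul_comm, ← ht']⟩
  · rw [closure_le, Set.singleton_subset_iff, SetLike.mem_coe, mem_closure_pair]
    exact ⟨s.gcdA t, s.gcdB t, by rw [Int.gcd_eq_gcd_ab]; module⟩

end AddSubgroup

namespace QuotientAddGroup

variable {G H : Type*} [AddCommGroup G] [AddCommGroup H]

noncomputable def congrClosure (e : G ≃+ H) (S : Set G) :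
    G ⧸ AddSubgroup.closure S ≃+ H ⧸ AddSubgroup.closure (e '' S) :=
  congr _ _ e (AddMonoidHom.map_closure _ S)

noncomputable def equivMapOfSurjective (f : G →+ H) (hf : Function.Surjective f)
    (K : AddSubgroup G) (hK : f.ker ≤ K) : G ⧸ K ≃+ H ⧸ K.map f :=
  liftEquiv K (φ := (mk' (K.map f)).comp f) ((mk'_surjective _).comp hf) <| by
    rw [← AddMonoidHom.comap_ker, ker_mk', AddSubgroup.comap_map_eq, sup_eq_left.mpr hK]

end QuotientAddGroup

def triLattice (p q t : ℤ) : AddSubgroup (ℤ × ℤ) := AddSubgroup.closure {(p, q), (0, t)}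

theorem triLattice_add_mul (p q t k : ℤ) : triLattice p (q + k * t) t = triLattice p q t := by
  have h := AddSubgroup.closure_pair_eq_of_det_eq_one ((p, q) : ℤ × ℤ) (0, t)
    (α := 1) (β := k) (γ := 0) (δ := 1) (by ring)
  simpa [triLattice] using h

def prodShear (k : ℤ) : (ℤ × ℤ) ≃+ (ℤ × ℤ) where
  toFun v := (v.1, v.2 + k * v.1)
  invFun v := (v.1, v.2 - k * v.1)
  left_inv v := by simp
  right_inv v := by simp
  map_add' v w := Prod.ext rfl (by simp only [Prod.fst_add, Prod.snd_add]; ring)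

noncomputable def triLatticeShearEquiv (p q t k : ℤ) :
    (ℤ × ℤ) ⧸ triLattice p q t ≃+ (ℤ × ℤ) ⧸ triLattice p (q + k * p) t :=
  (QuotientAddGroup.congrClosure (prodShear k) _).trans <|
    QuotientAddGroup.quotientAddEquivOfEq <| by simp [triLattice, Set.image_pair, prodShear]

theorem nonempty_triLattice_equiv_of_modEq {p q q' t : ℤ} (h : q ≡ q' [ZMOD Int.gcd p t]) :
    Nonempty ((ℤ × ℤ) ⧸ triLattice p q t ≃+ (ℤ × ℤ) ⧸ triLattice p q' t) := by
  obtain ⟨j, hj⟩ := h.dvd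
  have hq' : q' = q + j * p.gcdA t * p + j * p.gcdB t * t := by
    linear_combination hj + j * Int.gcd_eq_gcd_ab p t
  rw [hq', triLattice_add_mul]
  exact ⟨triLatticeShearEquiv p q t _⟩

theorem closure_pair_eq_triLattice {p₁ q₁ p₂ q₂ g p₁' p₂' σ τ : ℤ} (h₁ : p₁ = g * p₁')
    (h₂ : p₂ = g * p₂') (hστ : σ * p₁' + τ * p₂' = 1) :
    AddSubgroup.closure {(p₁, q₁), (p₂, q₂)} =
      triLattice g (σ * q₁ + τ * q₂) (p₁' * q₂ - p₂' * q₁) := by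
  have e₁ : σ • (p₁, q₁) + τ • (p₂, q₂) = ((g, σ * q₁ + τ * q₂) : ℤ × ℤ) := by
    ext <;> simp only [Prod.fst_add, Prod.snd_add, Prod.smul_fst, Prod.smul_snd, smul_eq_mul]
    linear_combination g * hστ + σ * h₁ + τ * h₂
  have e₂ : (-p₂') • (p₁, q₁) + p₁' • (p₂, q₂) = ((0, p₁' * q₂ - p₂' * q₁) : ℤ × ℤ) := by
    ext <;> simp only [Prod.fst_add, Prod.snd_add, Prod.smul_fst, Prod.smul_snd, smul_eq_mul]
    · linear_combination -p₂' * h₁ + p₁' * h₂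
    · ring
  rw [triLattice, ← e₁, ← e₂, AddSubgroup.closure_pair_eq_of_det_eq_one]
  linear_combination hστ

theorem closure_triple_eq_triLattice (p q s t : ℤ) :
    AddSubgroup.closure {(p, q), (0, s), (0, t)} = triLattice p q (Int.gcd s t) := by
  have hy (x : ℤ) : ((0, x) : ℤ × ℤ) = x • (0, 1) := by simp
  rw [triLattice, Set.insert_eq, Set.insert_eq (p, q), AddSubgroup.closure_union,
    AddSubgroup.closure_union, hy s, hy t, hy (Int.gcd s t), AddSubgroup.closure_pair_zsmul]

noncomputable def triLatticeSwapEquiv {p q t w t' q' σ τ : ℤ} (ht : t = w * t')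
    (hq : q = w * q') (hστ : σ * t' + τ * q' = 1) :
    (ℤ × ℤ) ⧸ triLattice p q t ≃+ (ℤ × ℤ) ⧸ triLattice w (τ * p) (t' * p) :=
  (QuotientAddGroup.congrClosure AddEquiv.prodComm _).trans <|
    QuotientAddGroup.quotientAddEquivOfEq <| by
      have h := closure_pair_eq_triLattice (q₁ := 0) (q₂ := p) ht hq hστ
      simp only [mul_zero, zero_add, sub_zero] at h
      rw [← h, Set.image_pair, Set.pair_comm]
      rfl

theorem triLattice_zero (p t : ℤ) :
    triLattice p 0 t = (AddSubgroup.zmultiples p).prod (AddSubgroup.zmultiples t) := by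
  apply le_antisymm
  · simp [triLattice, AddSubgroup.closure_le, Set.insert_subset_iff, AddSubgroup.mem_prod]
  · rintro ⟨x, y⟩ ⟨⟨m, rfl⟩, ⟨n, rfl⟩⟩
    exact AddSubgroup.mem_closure_pair.mpr ⟨m, n, by simp⟩

noncomputable def triLatticeZeroEquiv (p t : ℕ) :
    (ℤ × ℤ) ⧸ triLattice p 0 t ≃+ ZMod p × ZMod t :=
  (QuotientAddGroup.quotientAddEquivOfEq (triLattice_zero p t)).trans <|
    (QuotientAddGroup.prodAddEquiv _ _).trans <|
      (Int.quotientZMultiplesNatEquivZMod p).prodCongr (Int.quotientZMultiplesNatEquivZMod t)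

theorem exists_modEq_pos_lt {p t : ℕ} (hp : 0 < p) {q : ℤ} (h : ¬((p : ℤ) ∣ q ∧ p ∣ t)) :
    ∃ r : ℤ, 0 < r ∧ r < p ∧ q ≡ r [ZMOD p.gcd t] := by
  have hn : 0 < p.gcd t := Nat.gcd_pos_of_pos_left t hp
  have hnp : p.gcd t ≤ p := Nat.gcd_le_left t hp
  by_cases hq : ((p.gcd t : ℕ) : ℤ) ∣ q
  · refine ⟨p.gcd t, by exact_mod_cast hn, ?_, ?_⟩
    · have : p.gcd t ≠ p := fun hpt => h ⟨hpt ▸ hq, Nat.gcd_eq_left_iff_dvd.mp hpt⟩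
      omega
    · exact (Int.modEq_zero_iff_dvd.mpr hq).trans (Int.modEq_zero_iff_dvd.mpr dvd_rfl).symm
  · refine ⟨q % p.gcd t, ?_, ?_, (Int.mod_modEq _ _).symm⟩
    · exact (Int.emod_nonneg _ (by omega)).lt_of_ne' (mt Int.dvd_of_emod_eq_zero hq)
    · have := Int.emod_lt_of_pos q (by omega : (0 : ℤ) < p.gcd t)
      omega

theorem dvd_gcd_gcd_iff {x p t : ℕ} {q : ℤ} :
    x ∣ Int.gcd q (p.gcd t) ↔ (x : ℤ) ∣ q ∧ (x : ℤ) ∣ p ∧ (x : ℤ) ∣ t := by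
  simp only [Int.dvd_gcd_iff, Int.natCast_dvd_natCast, Nat.dvd_gcd_iff]

theorem gcd_gcd_eq_of_coprime_factors {p t w t' : ℕ} {q q' σ τ : ℤ} (ht : (t : ℤ) = w * t')
    (hq : q = w * q') (hστ : σ * t' + τ * q' = 1) :
    Int.gcd (τ * p) (w.gcd (t' * p)) = Int.gcd q (p.gcd t) := by
  refine Nat.dvd_left_iff_eq.mp fun x => ?_
  rw [dvd_gcd_gcd_iff, dvd_gcd_gcd_iff, Nat.cast_mul]
  constructor
  · rintro ⟨hτp, hw, ht'p⟩
    have hp : (p : ℤ) = σ * (t' * p) + q' * (τ * p) := by linear_combination (-p : ℤ) * hστ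
    exact ⟨hq ▸ hw.mul_right _, hp ▸ dvd_add (ht'p.mul_left _) (hτp.mul_left _),
      ht ▸ hw.mul_right _⟩
  · rintro ⟨hxq, hxp, hxt⟩
    have hw : (w : ℤ) = σ * t + τ * q := by
      linear_combination (-w : ℤ) * hστ - σ * ht - τ * hq
    exact ⟨hxp.mul_left _, hw ▸ dvd_add (hxt.mul_left _) (hxq.mul_left _), hxp.mul_left _⟩

theorem nonempty_quotient_triLattice_equiv (p t : ℕ) (hp : 0 < p) (ht : 0 < t) (q : ℤ) :
    Nonempty ((ℤ × ℤ) ⧸ triLattice p q t ≃+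
      ZMod (Int.gcd q (p.gcd t)) × ZMod (p * t / Int.gcd q (p.gcd t))) := by
  induction p using Nat.strong_induction_on generalizing t q with
  | _ p ih =>
  by_cases hbase : (p : ℤ) ∣ q ∧ p ∣ t
  · obtain ⟨hpq, hpt⟩ := hbase
    obtain ⟨e⟩ := nonempty_triLattice_equiv_of_modEq (p := p) (t := t) (q' := 0)
      (by simpa [Nat.gcd_eq_left hpt] using Int.modEq_zero_iff_dvd.mpr hpq)
    have hgcd : Int.gcd q (p.gcd t) = p := by
      rw [Nat.gcd_eq_left hpt]
      exact_mod_cast (Int.gcd_eq_right_iff_dvd (Nat.cast_nonneg p)).mpr hpq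
    rw [hgcd, Nat.mul_div_cancel_left t hp]
    exact ⟨e.trans (triLatticeZeroEquiv p t)⟩
  · obtain ⟨r, hr0, hrp, hqr⟩ := exists_modEq_pos_lt hp hbase
    obtain ⟨e₁⟩ := nonempty_triLattice_equiv_of_modEq (p := p) (t := t) (by simpa using hqr)
    obtain ⟨w, t', r', hw, hcop, htw, hrw⟩ :=
      Int.exists_gcd_one' (m := t) (n := r) (Int.gcd_pos_of_ne_zero_right _ hr0.ne')
    obtain ⟨σ, τ, hστ⟩ := Int.isCoprime_iff_gcd_eq_one.mpr hcop
    lift t' to ℕ using by nlinarith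
    rw [mul_comm] at htw hrw
    have hwp : w < p := by
      have := Int.le_of_dvd hr0 ⟨r', hrw⟩
      omega
    have htw' : t = w * t' := by exact_mod_cast htw
    have ht'p : 0 < t' * p := Nat.mul_pos (Nat.pos_of_mul_pos_left (htw' ▸ ht)) hp
    obtain ⟨e₂⟩ := ih w hwp (t' * p) hw ht'p (τ * p)
    have hgcd : Int.gcd r (p.gcd t) = Int.gcd q (p.gcd t) := by
      rw [← Int.gcd_emod, ← hqr, Int.gcd_emod]
    have hprod : w * (t' * p) = p * t := by
      rw [htw']
      ring
    rw [gcd_gcd_eq_of_coprime_factors htw hrw hστ, hgcd, hprod, Nat.cast_mul] at e₂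
    exact ⟨e₁.trans ((triLatticeSwapEquiv htw hrw hστ).trans e₂)⟩

theorem exists_closure_eq_triLattice (a b c : ℕ) (ha : 0 < a) :
    ∃ τ : ℤ, AddSubgroup.closure {((a : ℤ), (0 : ℤ)), (-(c : ℤ), -(c : ℤ)), (0, (b : ℤ))} =
      triLattice (a.gcd c) (τ * c) ((a.lcm c).gcd b) := by
  obtain ⟨a', c', hcop, hac, hcc⟩ := Nat.exists_coprime a c
  obtain ⟨σ, τ, hστ⟩ := Nat.isCoprime_iff_coprime.mpr hcop
  have hlcm : a' * c = a.lcm c := by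
    refine Nat.eq_of_mul_eq_mul_left (Nat.gcd_pos_of_pos_left c ha) ?_
    rw [Nat.gcd_mul_lcm, ← Nat.mul_assoc, Nat.mul_comm _ a', ← hac]
  have hac' : (a : ℤ) = a' * a.gcd c := by exact_mod_cast hac
  have hcc' : (c : ℤ) = c' * a.gcd c := by exact_mod_cast hcc
  have hpair := closure_pair_eq_triLattice (q₁ := 0) (q₂ := -(c : ℤ))
    (by linear_combination hac' : (a : ℤ) = a.gcd c * a')
    (by linear_combination -hcc' : -(c : ℤ) = a.gcd c * -c')
    (by linear_combination hστ : σ * a' + -τ * -(c' : ℤ) = 1)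
  refine ⟨τ, ?_⟩
  rw [AddSubgroup.closure_insert_insert_congr _ hpair, closure_triple_eq_triLattice]
  congr 2
  · ring
  · rw [← hlcm, mul_zero, sub_zero, mul_neg, Int.neg_gcd]
    norm_cast

def subLastCoord : ℤ × ℤ × ℤ →+ ℤ × ℤ where
  toFun v := (v.1 - v.2.2, v.2.1 - v.2.2)
  map_zero' := rfl
  map_add' v w := by ext <;> simp only [Prod.fst_add, Prod.snd_add] <;> ring

theorem subLastCoord_surjective : Function.Surjective subLastCoord :=
  fun v => ⟨(v.1, v.2, 0), by simp [subLastCoord]⟩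

theorem ker_subLastCoord_le {K : AddSubgroup (ℤ × ℤ × ℤ)} (h : (1, 1, 1) ∈ K) :
    subLastCoord.ker ≤ K := by
  rintro ⟨x, y, z⟩ hv
  simp only [AddMonoidHom.mem_ker, subLastCoord, AddMonoidHom.coe_mk, ZeroHom.coe_mk,
    Prod.mk_eq_zero, sub_eq_zero] at hv
  rw [hv.1, hv.2]
  simpa using K.zsmul_mem h z

theorem map_subLastCoord_closure (a b c : ℕ) :
    (AddSubgroup.closure {((a : ℤ), (0 : ℤ), (0 : ℤ)), ((0 : ℤ), (b : ℤ), (0 : ℤ)),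
      ((0 : ℤ), (0 : ℤ), (c : ℤ)), ((1 : ℤ), (1 : ℤ), (1 : ℤ))}).map subLastCoord =
      AddSubgroup.closure {((a : ℤ), (0 : ℤ)), (-(c : ℤ), -(c : ℤ)), (0, (b : ℤ))} := by
  rw [AddMonoidHom.map_closure]
  conv_rhs => rw [← AddSubgroup.closure_insert_zero]
  congr 1
  ext v
  simp [subLastCoord, eq_comm, Prod.mk_zero_zero]
  tauto

theorem gcd_gcd_lcm_eq (a b c : ℕ) (τ : ℤ) :
    Int.gcd (τ * c) ((a.gcd c).gcd ((a.lcm c).gcd b)) = a.gcd (b.gcd c) := by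
  have hdvd : (a.gcd c).gcd (a.lcm c) = a.gcd c :=
    Nat.gcd_eq_left ((Nat.gcd_dvd_left a c).trans (Nat.dvd_lcm_left a c))
  rw [← Nat.gcd_assoc, hdvd, Nat.gcd_assoc, Nat.gcd_comm c b]
  exact_mod_cast (Int.gcd_eq_right_iff_dvd (Nat.cast_nonneg _)).mpr <| Dvd.dvd.mul_left
    (Int.natCast_dvd_natCast.mpr ((Nat.gcd_dvd_right _ _).trans (Nat.gcd_dvd_right _ _))) τ

theorem gcd_mul_gcd_lcm_eq (a b c : ℕ) :
    a.gcd c * (a.lcm c).gcd b = (b * c).gcd ((a * c).gcd (a * b)) := by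
  rw [← Nat.gcd_mul_left, Nat.gcd_mul_lcm, ← Nat.gcd_mul_right, Nat.mul_comm c b]
  ac_rfl

theorem quotient_by_J_iso_general (a b c : ℕ) (ha : 0 < a) (hb : 0 < b) :
    Nonempty ((ℤ × ℤ × ℤ) ⧸ AddSubgroup.closure
        {((a : ℤ), (0 : ℤ), (0 : ℤ)), ((0 : ℤ), (b : ℤ), (0 : ℤ)),
          ((0 : ℤ), (0 : ℤ), (c : ℤ)), ((1 : ℤ), (1 : ℤ), (1 : ℤ))} ≃+
      ZMod (Nat.gcd a (Nat.gcd b c)) ×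
        ZMod (Nat.gcd (b * c) (Nat.gcd (a * c) (a * b)) / Nat.gcd a (Nat.gcd b c))) := by
  obtain ⟨τ, hL⟩ := exists_closure_eq_triLattice a b c ha
  obtain ⟨e⟩ := nonempty_quotient_triLattice_equiv (a.gcd c) ((a.lcm c).gcd b)
    (Nat.gcd_pos_of_pos_left c ha) (Nat.gcd_pos_of_pos_right _ hb) (τ * c)
  rw [gcd_gcd_lcm_eq, gcd_mul_gcd_lcm_eq] at e
  refine ⟨(QuotientAddGroup.equivMapOfSurjective _ subLastCoord_surjective _
    (ker_subLastCoord_le (AddSubgroup.subset_closure (by simp)))).trans ?_⟩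
  exact (QuotientAddGroup.quotientAddEquivOfEq <| (map_subLastCoord_closure a b c).trans hL).trans e

/-- Let `a,b,c` be positive integers, `d = gcd(a,b,c)`, `m = gcd(bc,ac,ab)`. Then
`ℤ³ / ⟨(a,0,0), (0,b,0), (0,0,c), (1,1,1)⟩ ≅ ℤ/d ⊕ ℤ/(m/d)`. -/
theorem quotient_by_J_iso (a b c : ℕ) (ha : 0 < a) (hb : 0 < b) (hc : 0 < c) :
    Nonempty ((ℤ × ℤ × ℤ) ⧸ AddSubgroup.closure
        {((a : ℤ), (0 : ℤ), (0 : ℤ)), ((0 : ℤ), (b : ℤ), (0 : ℤ)),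
          ((0 : ℤ), (0 : ℤ), (c : ℤ)), ((1 : ℤ), (1 : ℤ), (1 : ℤ))} ≃+
      ZMod (Nat.gcd a (Nat.gcd b c)) ×
        ZMod (Nat.gcd (b * c) (Nat.gcd (a * c) (a * b)) / Nat.gcd a (Nat.gcd b c))) :=
  quotient_by_J_iso_general a b c ha hb
end

section
/- Let a,b,c be positive integers with gcd(bc,ac,ab) = 1. Then for any algebraically closed field K and any (λ₀,λ₁,λ_∞) ∈ (Kˣ)³ with λ₀^a = λ₁^b = λ_∞^c, there exists λ ∈ Kˣ such that (λ₀,λ₁,λ_∞) = (λ^{bc}, λ^{ac}, λ^{ab}). -/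
private lemma aux_pow {G : Type*} [CommGroup G] (x y z t : G) (p q r A U V : ℤ)
    (hx : x ^ p = t) (hy : y ^ q = t) (hz : z ^ r = t)
    (hbez : q * r * A + p * r * U + p * q * V = 1) :
    (x ^ A * y ^ U * z ^ V) ^ (q * r) = x := by
  have hy' : (y ^ U) ^ (q * r) = t ^ (U * r) := by
    rw [← hy, ← zpow_mul, ← zpow_mul]; congr 1; ring
  have hz' : (z ^ V) ^ (q * r) = t ^ (V * q) := by
    rw [← hz, ← zpow_mul, ← zpow_mul]; congr 1; ring
  rw [mul_zpow, mul_zpow, hy', hz', ← zpow_mul, ← hx, ← zpow_mul, ← zpow_mul,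
    ← zpow_add, ← zpow_add]
  rw [show A * (q * r) + p * (U * r) + p * (V * q) = 1 by linear_combination hbez, zpow_one]

/-- If `gcd(bc,ac,ab) = 1`, then over an algebraically closed field `K`, every
`(λ₀,λ₁,λ∞) ∈ (Kˣ)³` with `λ₀^a = λ₁^b = λ∞^c` is of the form `(λ^{bc}, λ^{ac}, λ^{ab})`. -/
theorem H_eq_Gm_of_gcd_eq_one (K : Type*) [Field K] [IsAlgClosed K]
    (a b c : ℕ) (ha : 0 < a) (hb : 0 < b) (hc : 0 < c)
    (hgcd : Nat.gcd (b * c) (Nat.gcd (a * c) (a * b)) = 1)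
    (l₀ l₁ li : Kˣ) (h₀₁ : l₀ ^ a = l₁ ^ b) (h₁i : l₁ ^ b = li ^ c) :
    ∃ l : Kˣ, l₀ = l ^ (b * c) ∧ l₁ = l ^ (a * c) ∧ li = l ^ (a * b) := by
  set d := Nat.gcd (a * c) (a * b) with hd
  set A : ℤ := Nat.gcdA (b * c) d
  set B : ℤ := Nat.gcdB (b * c) d
  set U : ℤ := Nat.gcdA (a * c) (a * b) * B
  set V : ℤ := Nat.gcdB (a * c) (a * b) * B
  have h1 : ((b * c : ℕ) : ℤ) * A + (d : ℤ) * B = 1 := by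
    have h := Nat.gcd_eq_gcd_ab (b * c) d
    rw [hgcd] at h
    exact_mod_cast h.symm
  have h2 : ((a * c : ℕ) : ℤ) * Nat.gcdA (a * c) (a * b)
      + ((a * b : ℕ) : ℤ) * Nat.gcdB (a * c) (a * b) = (d : ℤ) :=
    (Nat.gcd_eq_gcd_ab (a * c) (a * b)).symm
  have hbez : (b : ℤ) * c * A + (a : ℤ) * c * U + (a : ℤ) * b * V = 1 := by
    push_cast at h1 h2
    linear_combination h1 + B * h2
  -- the common value
  have e0 : l₀ ^ (a : ℤ) = l₁ ^ (b : ℤ) := by rw [zpow_natCast, zpow_natCast]; exact h₀₁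
  have e1 : l₁ ^ (b : ℤ) = l₁ ^ (b : ℤ) := rfl
  have ei : li ^ (c : ℤ) = l₁ ^ (b : ℤ) := by rw [zpow_natCast, zpow_natCast]; exact h₁i.symm
  refine ⟨l₀ ^ A * l₁ ^ U * li ^ V, ?_, ?_, ?_⟩
  · rw [← zpow_natCast _ (b * c), Nat.cast_mul]
    exact (aux_pow l₀ l₁ li _ a b c A U V e0 e1 ei (by linear_combination hbez)).symm
  · rw [← zpow_natCast _ (a * c), Nat.cast_mul,
      show l₀ ^ A * l₁ ^ U * li ^ V = l₁ ^ U * l₀ ^ A * li ^ V by rw [mul_comm (l₀ ^ A)]]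
    exact (aux_pow l₁ l₀ li _ b a c U A V e1 e0 ei (by linear_combination hbez)).symm
  · rw [← zpow_natCast _ (a * b), Nat.cast_mul,
      show l₀ ^ A * l₁ ^ U * li ^ V = li ^ V * l₀ ^ A * l₁ ^ U by rw [mul_comm, ← mul_assoc]]
    exact (aux_pow li l₀ l₁ _ c a b V A U ei e0 e1 (by linear_combination hbez)).symm
end

section
/- Let a,b,c be positive integers, A,B,C units in a ring R = ℤ[S⁻¹] (S a finite set of primes, R a PID with trivial Picard group). If (s,t) ∈ R² with sR + tR = R, sR is an a-th power of an ideal, tR is a c-th power, and (s-t)R is a b-th power, then there exist units A,B,C ∈ Rˣ and x,y,z ∈ R with s = -A x^a, t = C z^c, s - t = B y^b, satisfying A x^a + B y^b + C z^c = 0 and x^a R + z^c R = R. -/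
/-! In a principal ideal domain an ideal power `(g)ⁿ` is `(gⁿ)`, and generators of the same
principal ideal differ by a unit; so each of `s`, `s - t`, `t` is a unit times a perfect power,
and the Fermat relation is the identity `s - (s - t) - t = 0`. -/

theorem exists_unit_mul_pow_of_span_singleton_eq_pow {R : Type*} [CommRing R] [IsDomain R]
    [IsPrincipalIdealRing R] {s : R} {n : ℕ} {J : Ideal R} (h : Ideal.span {s} = J ^ n) :
    ∃ (u : Rˣ) (x : R), s = u * x ^ n := by
  obtain ⟨g, rfl⟩ : ∃ g, J = Ideal.span {g} :=
    ⟨_, (Submodule.IsPrincipal.span_singleton_generator J).symm⟩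
  rw [Ideal.span_singleton_pow, Ideal.span_singleton_eq_span_singleton] at h
  obtain ⟨u, hu⟩ := h.symm
  exact ⟨u, g, by rw [← hu, mul_comm]⟩

theorem belyi_stack_points_from_fermat_general (R : Type*) [CommRing R] [IsDomain R]
    [IsPrincipalIdealRing R] (a b c : ℕ)
    (s t : R) (hst : IsCoprime s t)
    (h0 : ∃ J : Ideal R, Ideal.span {s} = J ^ a)
    (h1 : ∃ J : Ideal R, Ideal.span {s - t} = J ^ b)
    (hi : ∃ J : Ideal R, Ideal.span {t} = J ^ c) :
    ∃ (A B C : Rˣ) (x y z : R),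
      s = -(A : R) * x ^ a ∧ t = (C : R) * z ^ c ∧ s - t = (B : R) * y ^ b ∧
      (A : R) * x ^ a + (B : R) * y ^ b + (C : R) * z ^ c = 0 ∧
      IsCoprime (x ^ a) (z ^ c) := by
  obtain ⟨u, x, rfl⟩ := exists_unit_mul_pow_of_span_singleton_eq_pow h0.choose_spec
  obtain ⟨w, z, rfl⟩ := exists_unit_mul_pow_of_span_singleton_eq_pow hi.choose_spec
  obtain ⟨v, y, hy⟩ := exists_unit_mul_pow_of_span_singleton_eq_pow h1.choose_spec
  refine ⟨-u, v, w, x, y, z, by simp, rfl, hy, ?_, hst.of_mul_left_right.of_mul_right_right⟩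
  push_cast
  linear_combination -hy

/-- Points of the Belyi stack over a PID arise from primitive solutions of generalized
Fermat equations with unit coefficients: if `(s,t)` is a unimodular pair such that `sR`
is an `a`-th power of an ideal, `(s-t)R` a `b`-th power, and `tR` a `c`-th power, then
there are units `A, B, C` and `x, y, z ∈ R` with `s = -A xᵃ`, `t = C z^c`,
`s - t = B y^b`, so that `A xᵃ + B y^b + C z^c = 0` and `xᵃ R + z^c R = R`. -/
theorem belyi_stack_points_from_fermat (R : Type*) [CommRing R] [IsDomain R]
    [IsPrincipalIdealRing R] (a b c : ℕ) (ha : 0 < a) (hb : 0 < b) (hc : 0 < c)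
    (s t : R) (hst : IsCoprime s t)
    (h0 : ∃ J : Ideal R, Ideal.span {s} = J ^ a)
    (h1 : ∃ J : Ideal R, Ideal.span {s - t} = J ^ b)
    (hi : ∃ J : Ideal R, Ideal.span {t} = J ^ c) :
    ∃ (A B C : Rˣ) (x y z : R),
      s = -(A : R) * x ^ a ∧ t = (C : R) * z ^ c ∧ s - t = (B : R) * y ^ b ∧
      (A : R) * x ^ a + (B : R) * y ^ b + (C : R) * z ^ c = 0 ∧
      IsCoprime (x ^ a) (z ^ c) :=
  belyi_stack_points_from_fermat_general R a b c s t hst h0 h1 hi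
end

section
/- Let K be the kernel of the multiplication map μ_a × μ_b × μ_c → μ_{lcm(a,b,c)}, (ξ₀,ξ₁,ξ_∞) ↦ ξ₀ξ₁ξ_∞, as groups of roots of unity in an algebraically closed field of characteristic coprime to abc. Then K is isomorphic to ℤ/dℤ × ℤ/(m/d)ℤ, where d = gcd(a,b,c) and m = gcd(bc,ac,ab). -/
/-- The product homomorphism `G × G × G →* G`, `(x,y,z) ↦ xyz`. -/
def tripleProdHom (G : Type*) [CommGroup G] : G × G × G →* G :=
  MonoidHom.fst G (G × G) * (MonoidHom.fst G G).comp (MonoidHom.snd G (G × G)) *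
    (MonoidHom.snd G G).comp (MonoidHom.snd G (G × G))

/-- The group `μ_n` of `n`-th roots of unity in `kˣ`, as the kernel of `x ↦ xⁿ`. -/
def mu (k : Type*) [Field k] (n : ℕ) : Subgroup kˣ :=
  (powMonoidHom n : kˣ →* kˣ).ker

/-! The kernel splits, by the Chinese remainder theorem, into its parts for the prime powers
dividing `abc`, and the invariants `d` and `m / d` are multiplicative along the same splitting.
For prime powers `a ∣ b ∣ c` (after permuting the three factors) the last coordinate of a kernel
element is determined by the first two, so the kernel is `μ_a × μ_b ≅ ℤ/a × ℤ/b`, and indeed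
`d = a`, `m = ab`. -/

theorem Nat.gcd_mul_mul_of_coprime {x₁ x₂ y₁ y₂ : ℕ} (h : Nat.Coprime (x₁ * y₁) (x₂ * y₂)) :
    Nat.gcd (x₁ * x₂) (y₁ * y₂) = Nat.gcd x₁ y₁ * Nat.gcd x₂ y₂ := by
  rw [Nat.Coprime.gcd_mul _ (h.of_dvd (dvd_mul_left _ _) (dvd_mul_left _ _)),
    Nat.Coprime.gcd_mul_right_cancel x₁ (h.of_dvd (dvd_mul_left _ _) (dvd_mul_right _ _)).symm,
    Nat.Coprime.gcd_mul_left_cancel x₂ (h.of_dvd (dvd_mul_right _ _) (dvd_mul_left _ _))]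

def gcd3 (a b c : ℕ) : ℕ := Nat.gcd a (Nat.gcd b c)

theorem gcd3_comm12 (a b c : ℕ) : gcd3 b a c = gcd3 a b c :=
  Nat.gcd_left_comm b a c

theorem gcd3_comm23 (a b c : ℕ) : gcd3 a c b = gcd3 a b c := by
  rw [gcd3, gcd3, Nat.gcd_comm c b]

theorem gcd3_of_dvd {a b c : ℕ} (hab : a ∣ b) (hbc : b ∣ c) : gcd3 a b c = a := by
  rw [gcd3, Nat.gcd_eq_left hbc, Nat.gcd_eq_left hab]

theorem gcd3_dvd_gcd3_mul (a b c : ℕ) : gcd3 a b c ∣ gcd3 (b * c) (a * c) (a * b) := by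
  have ha : gcd3 a b c ∣ a := Nat.gcd_dvd_left _ _
  have hb : gcd3 a b c ∣ b := (Nat.gcd_dvd_right _ _).trans (Nat.gcd_dvd_left _ _)
  exact Nat.dvd_gcd (hb.mul_right c) (Nat.dvd_gcd (ha.mul_right c) (ha.mul_right b))

theorem gcd3_mul {a₁ b₁ c₁ a₂ b₂ c₂ : ℕ} (h : Nat.Coprime (a₁ * b₁ * c₁) (a₂ * b₂ * c₂)) :
    gcd3 (a₁ * a₂) (b₁ * b₂) (c₁ * c₂) = gcd3 a₁ b₁ c₁ * gcd3 a₂ b₂ c₂ := by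
  have hdvd (a b c : ℕ) : a * Nat.gcd b c ∣ a * b * c := by
    rw [mul_assoc]
    exact mul_dvd_mul_left a ((Nat.gcd_dvd_left b c).mul_right c)
  rw [gcd3, gcd3, gcd3, Nat.gcd_mul_mul_of_coprime (h.of_dvd ⟨a₁, by ring⟩ ⟨a₂, by ring⟩),
    Nat.gcd_mul_mul_of_coprime (h.of_dvd (hdvd _ _ _) (hdvd _ _ _))]

theorem gcd3_mul_of_dvd {a b c : ℕ} (hab : a ∣ b) (hbc : b ∣ c) :
    gcd3 (b * c) (a * c) (a * b) = a * b := by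
  rw [gcd3, Nat.gcd_eq_right (mul_dvd_mul_left a hbc), mul_comm b c]
  exact Nat.gcd_eq_right (mul_dvd_mul_right (hab.trans hbc) b)

def ZMod.prodProdAddEquiv {x₁ x₂ y₁ y₂ : ℕ} (hx : Nat.Coprime x₁ x₂) (hy : Nat.Coprime y₁ y₂) :
    (ZMod x₁ × ZMod y₁) × (ZMod x₂ × ZMod y₂) ≃+ ZMod (x₁ * x₂) × ZMod (y₁ * y₂) :=
  (AddEquiv.prodProdProdComm _ _ _ _).trans
    ((ZMod.chineseRemainder hx).symm.toAddEquiv.prodCongr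
      (ZMod.chineseRemainder hy).symm.toAddEquiv)

/-- `ℤ/d × ℤ/(m/d)` with `d = gcd(a,b,c)` and `m = gcd(bc,ac,ab)`, written multiplicatively. -/
abbrev invariantGroup (a b c : ℕ) : Type :=
  Multiplicative (ZMod (gcd3 a b c) × ZMod (gcd3 (b * c) (a * c) (a * b) / gcd3 a b c))

theorem invariantGroup_mul {a₁ b₁ c₁ a₂ b₂ c₂ : ℕ}
    (h : Nat.Coprime (a₁ * b₁ * c₁) (a₂ * b₂ * c₂)) :
    Nonempty (invariantGroup a₁ b₁ c₁ × invariantGroup a₂ b₂ c₂ ≃*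
      invariantGroup (a₁ * a₂) (b₁ * b₂) (c₁ * c₂)) := by
  have hm : Nat.Coprime (b₁ * c₁ * (a₁ * c₁) * (a₁ * b₁)) (b₂ * c₂ * (a₂ * c₂) * (a₂ * b₂)) := by
    convert Nat.Coprime.pow 2 2 h using 1 <;> ring
  have hd_dvd (a b c : ℕ) : gcd3 a b c ∣ a * b * c :=
    (Nat.gcd_dvd_left _ _).trans ⟨b * c, by ring⟩
  have hmd_dvd (a b c : ℕ) : gcd3 (b * c) (a * c) (a * b) / gcd3 a b c ∣ a * b * c :=
    (Nat.div_dvd_of_dvd (gcd3_dvd_gcd3_mul a b c)).trans ((Nat.gcd_dvd_left _ _).trans ⟨a, by ring⟩)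
  unfold invariantGroup
  rw [mul_mul_mul_comm b₁, mul_mul_mul_comm a₁ a₂ c₁, mul_mul_mul_comm a₁ a₂ b₁,
    gcd3_mul h, gcd3_mul hm, ← Nat.div_mul_div_comm (gcd3_dvd_gcd3_mul _ _ _)
      (gcd3_dvd_gcd3_mul _ _ _)]
  exact ⟨(MulEquiv.prodMultiplicative _ _).symm.trans (AddEquiv.toMultiplicative
    (ZMod.prodProdAddEquiv (h.of_dvd (hd_dvd _ _ _) (hd_dvd _ _ _))
      (h.of_dvd (hmd_dvd _ _ _) (hmd_dvd _ _ _))))⟩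

theorem of_sorted₃ {α : Type*} [LinearOrder α] {P : α → α → α → Prop}
    (swap12 : ∀ {x y z}, P x y z → P y x z) (swap23 : ∀ {x y z}, P x y z → P x z y)
    (sorted : ∀ {x y z}, x ≤ y → y ≤ z → P x y z) (x y z : α) : P x y z := by
  rcases le_total x y with hxy | hyx
  · rcases le_total y z with hyz | hzy
    · exact sorted hxy hyz
    rcases le_total x z with hxz | hzx
    · exact swap23 (sorted hxz hzy)
    · exact swap23 (swap12 (sorted hzx hxy))
  · rcases le_total x z with hxz | hzx
    · exact swap12 (sorted hyx hxz)
    rcases le_total y z with hyz | hzy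
    · exact swap12 (swap23 (sorted hyz hzx))
    · exact swap12 (swap23 (swap12 (sorted hzy hyx)))

open Nat in
theorem Nat.triple_induction_on_prime_pow_coprime {P : ℕ → ℕ → ℕ → Prop}
    (prime_pow : ∀ p i j l : ℕ, p.Prime → P (p ^ i) (p ^ j) (p ^ l))
    (coprime_mul : ∀ a₁ b₁ c₁ a₂ b₂ c₂ : ℕ, Nat.Coprime (a₁ * b₁ * c₁) (a₂ * b₂ * c₂) →
      P a₁ b₁ c₁ → P a₂ b₂ c₂ → P (a₁ * a₂) (b₁ * b₂) (c₁ * c₂))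
    {a b c : ℕ} (h : a * b * c ≠ 0) : P a b c := by
  induction hn : a * b * c using Nat.strong_induction_on generalizing a b c with
  | _ n ih =>
  subst hn
  by_cases h1 : a * b * c = 1
  · obtain ⟨⟨rfl, rfl⟩, rfl⟩ : (a = 1 ∧ b = 1) ∧ c = 1 := by simpa [mul_eq_one] using h1
    simpa using prime_pow 2 0 0 0 Nat.prime_two
  have hp := Nat.minFac_prime h1
  set p := (a * b * c).minFac
  obtain ⟨ha, hb, hc⟩ : a ≠ 0 ∧ b ≠ 0 ∧ c ≠ 0 := by simpa [and_assoc] using h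
  have hcop : Nat.Coprime p (ordCompl[p] a * ordCompl[p] b * ordCompl[p] c) :=
    ((Nat.coprime_ordCompl hp ha).mul_right (Nat.coprime_ordCompl hp hb)).mul_right
      (Nat.coprime_ordCompl hp hc)
  have hdvd : ordCompl[p] a * ordCompl[p] b * ordCompl[p] c ∣ a * b * c :=
    mul_dvd_mul (mul_dvd_mul (Nat.ordCompl_dvd a p) (Nat.ordCompl_dvd b p)) (Nat.ordCompl_dvd c p)
  have hlt : ordCompl[p] a * ordCompl[p] b * ordCompl[p] c < a * b * c := by
    refine lt_of_le_of_ne (Nat.le_of_dvd (Nat.pos_of_ne_zero h) hdvd) fun heq => hp.one_lt.ne' ?_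
    exact hcop.eq_one_of_dvd (heq ▸ Nat.minFac_dvd _)
  have key := coprime_mul (ordProj[p] a) (ordProj[p] b) (ordProj[p] c) _ _ _ ?_
    (prime_pow p _ _ _ hp) (ih _ hlt (ne_zero_of_dvd_ne_zero h hdvd) rfl)
  · rwa [Nat.ordProj_mul_ordCompl_eq_self, Nat.ordProj_mul_ordCompl_eq_self,
      Nat.ordProj_mul_ordCompl_eq_self] at key
  · rw [← pow_add, ← pow_add]
    exact hcop.pow_left _

theorem pow_eq_one_of_dvd {M : Type*} [Monoid M] {x : M} {m n : ℕ} (hx : x ^ m = 1)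
    (h : m ∣ n) : x ^ n = 1 := by
  obtain ⟨t, rfl⟩ := h
  rw [pow_mul, hx, one_pow]

noncomputable def Subgroup.prodMulEquivOfCoprime {P : Type*} [CommGroup P]
    {H H₁ H₂ : Subgroup P} {n₁ n₂ : ℕ} (hn : Nat.Coprime n₁ n₂) (h₁ : H₁ ≤ H) (h₂ : H₂ ≤ H)
    (hexp₁ : ∀ x ∈ H₁, x ^ n₁ = 1) (hexp₂ : ∀ x ∈ H₂, x ^ n₂ = 1)
    (hpow₁ : ∀ g ∈ H, g ^ n₂ ∈ H₁) (hpow₂ : ∀ g ∈ H, g ^ n₁ ∈ H₂) : H₁ × H₂ ≃* H :=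
  MulEquiv.ofBijective ((Subgroup.inclusion h₁).coprod (Subgroup.inclusion h₂)) <| by
    refine ⟨(injective_iff_map_eq_one _).mpr fun ⟨x, y⟩ hxy => ?_, fun g => ?_⟩
    · have hxy : (x : P) * y = 1 := congrArg Subtype.val hxy
      have hx₂ : (x : P) ∈ H₂ := eq_inv_of_mul_eq_one_left hxy ▸ inv_mem y.2
      have hx : x = 1 := Subtype.ext <| by
        simpa [hn.gcd_eq_one] using pow_gcd_eq_one.mpr ⟨hexp₁ x x.2, hexp₂ x hx₂⟩
      have hy : y = 1 := Subtype.ext <| by simpa [hx] using hxy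
      rw [hx, hy, Prod.mk_one_one]
    · -- Bezout: `g = (g ^ n₂) ^ B * (g ^ n₁) ^ A` where `n₁ A + n₂ B = 1`.
      have hbez : (n₂ : ℤ) * n₁.gcdB n₂ + n₁ * n₁.gcdA n₂ = 1 := by
        rw [add_comm, ← Nat.gcd_eq_gcd_ab, hn.gcd_eq_one, Nat.cast_one]
      refine ⟨(⟨(g ^ n₂ : P) ^ n₁.gcdB n₂, zpow_mem (hpow₁ g g.2) _⟩,
        ⟨(g ^ n₁ : P) ^ n₁.gcdA n₂, zpow_mem (hpow₂ g g.2) _⟩), Subtype.ext ?_⟩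
      simp only [MonoidHom.coprod_apply, Subgroup.coe_mul, Subgroup.coe_inclusion]
      rw [← zpow_natCast, ← zpow_natCast, ← zpow_mul, ← zpow_mul, ← zpow_add, hbez, zpow_one]

section TripleProdKer

variable {G : Type*} [CommGroup G] {a b c : ℕ}

variable (G) in
def tripleProdKer (a b c : ℕ) : Subgroup (G × G × G) :=
  ((powMonoidHom a : G →* G).ker.prod ((powMonoidHom b : G →* G).ker.prod
    (powMonoidHom c : G →* G).ker)) ⊓ (tripleProdHom G).ker

theorem mem_tripleProdKer {g : G × G × G} :
    g ∈ tripleProdKer G a b c ↔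
      g.1 ^ a = 1 ∧ g.2.1 ^ b = 1 ∧ g.2.2 ^ c = 1 ∧ g.1 * g.2.1 * g.2.2 = 1 := by
  simp [tripleProdKer, tripleProdHom, Subgroup.mem_prod, and_assoc]

theorem swap12_mem_tripleProdKer {g : G × G × G} (hg : g ∈ tripleProdKer G a b c) :
    (g.2.1, g.1, g.2.2) ∈ tripleProdKer G b a c := by
  obtain ⟨h₁, h₂, h₃, h⟩ := mem_tripleProdKer.mp hg
  exact mem_tripleProdKer.mpr ⟨h₂, h₁, h₃, by rwa [mul_comm g.2.1]⟩

theorem swap23_mem_tripleProdKer {g : G × G × G} (hg : g ∈ tripleProdKer G a b c) :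
    (g.1, g.2.2, g.2.1) ∈ tripleProdKer G a c b := by
  obtain ⟨h₁, h₂, h₃, h⟩ := mem_tripleProdKer.mp hg
  exact mem_tripleProdKer.mpr ⟨h₁, h₃, h₂, by rwa [mul_right_comm]⟩

variable (a b c) in
def tripleProdKerSwap12 : tripleProdKer G a b c ≃* tripleProdKer G b a c where
  toFun g := ⟨(g.1.2.1, g.1.1, g.1.2.2), swap12_mem_tripleProdKer g.2⟩
  invFun g := ⟨(g.1.2.1, g.1.1, g.1.2.2), swap12_mem_tripleProdKer g.2⟩
  left_inv _ := rfl
  right_inv _ := rfl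
  map_mul' _ _ := rfl

variable (a b c) in
def tripleProdKerSwap23 : tripleProdKer G a b c ≃* tripleProdKer G a c b where
  toFun g := ⟨(g.1.1, g.1.2.2, g.1.2.1), swap23_mem_tripleProdKer g.2⟩
  invFun g := ⟨(g.1.1, g.1.2.2, g.1.2.1), swap23_mem_tripleProdKer g.2⟩
  left_inv _ := rfl
  right_inv _ := rfl
  map_mul' _ _ := rfl

/-- The third coordinate `(ξ₀ξ₁)⁻¹` lies in `μ_c` automatically. -/
def tripleProdKerEquivOfDvd (hac : a ∣ c) (hbc : b ∣ c) :
    tripleProdKer G a b c ≃* (powMonoidHom a : G →* G).ker × (powMonoidHom b : G →* G).ker where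
  toFun g := (⟨g.1.1, MonoidHom.mem_ker.mpr (mem_tripleProdKer.mp g.2).1⟩,
    ⟨g.1.2.1, MonoidHom.mem_ker.mpr (mem_tripleProdKer.mp g.2).2.1⟩)
  invFun xy := ⟨(xy.1, xy.2, (xy.1 * xy.2 : G)⁻¹), by
    have hx : (xy.1 : G) ^ a = 1 := MonoidHom.mem_ker.mp xy.1.2
    have hy : (xy.2 : G) ^ b = 1 := MonoidHom.mem_ker.mp xy.2.2
    refine mem_tripleProdKer.mpr ⟨hx, hy, ?_, mul_inv_cancel _⟩
    rw [inv_pow, mul_pow, pow_eq_one_of_dvd hx hac, pow_eq_one_of_dvd hy hbc, mul_one, inv_one]⟩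
  left_inv g := Subtype.ext <| Prod.ext rfl <| Prod.ext rfl <|
    (eq_inv_of_mul_eq_one_right (mem_tripleProdKer.mp g.2).2.2.2).symm
  right_inv _ := rfl
  map_mul' _ _ := rfl

theorem tripleProdKer_mono {a' b' c' : ℕ} (ha : a ∣ a') (hb : b ∣ b') (hc : c ∣ c') :
    tripleProdKer G a b c ≤ tripleProdKer G a' b' c' := fun g hg => by
  obtain ⟨h₁, h₂, h₃, h⟩ := mem_tripleProdKer.mp hg
  exact mem_tripleProdKer.mpr
    ⟨pow_eq_one_of_dvd h₁ ha, pow_eq_one_of_dvd h₂ hb, pow_eq_one_of_dvd h₃ hc, h⟩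

theorem pow_eq_one_of_mem_tripleProdKer {g : G × G × G} (hg : g ∈ tripleProdKer G a b c) :
    g ^ (a * b * c) = 1 := by
  obtain ⟨h₁, h₂, h₃, -⟩ := mem_tripleProdKer.mp hg
  exact Prod.ext (pow_eq_one_of_dvd h₁ ⟨b * c, by ring⟩) <| Prod.ext
    (pow_eq_one_of_dvd h₂ ⟨a * c, by ring⟩) (pow_eq_one_of_dvd h₃ ⟨a * b, by ring⟩)

theorem pow_mem_tripleProdKer {a' b' c' n : ℕ} {g : G × G × G} (hg : g ∈ tripleProdKer G a b c)
    (ha : a ∣ n * a') (hb : b ∣ n * b') (hc : c ∣ n * c') : g ^ n ∈ tripleProdKer G a' b' c' := by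
  obtain ⟨h₁, h₂, h₃, h⟩ := mem_tripleProdKer.mp hg
  refine mem_tripleProdKer.mpr ⟨?_, ?_, ?_, ?_⟩
  · exact (pow_mul g.1 n a').symm.trans (pow_eq_one_of_dvd h₁ ha)
  · exact (pow_mul g.2.1 n b').symm.trans (pow_eq_one_of_dvd h₂ hb)
  · exact (pow_mul g.2.2 n c').symm.trans (pow_eq_one_of_dvd h₃ hc)
  · simp only [Prod.pow_fst, Prod.pow_snd, ← mul_pow, h, one_pow]

noncomputable def tripleProdKerMulEquivOfCoprime {a₁ b₁ c₁ a₂ b₂ c₂ : ℕ}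
    (h : Nat.Coprime (a₁ * b₁ * c₁) (a₂ * b₂ * c₂)) :
    tripleProdKer G a₁ b₁ c₁ × tripleProdKer G a₂ b₂ c₂ ≃*
      tripleProdKer G (a₁ * a₂) (b₁ * b₂) (c₁ * c₂) :=
  Subgroup.prodMulEquivOfCoprime h
    (tripleProdKer_mono (dvd_mul_right _ _) (dvd_mul_right _ _) (dvd_mul_right _ _))
    (tripleProdKer_mono (dvd_mul_left _ _) (dvd_mul_left _ _) (dvd_mul_left _ _))
    (fun _ => pow_eq_one_of_mem_tripleProdKer) (fun _ => pow_eq_one_of_mem_tripleProdKer)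
    (fun _ hg => pow_mem_tripleProdKer hg ⟨b₂ * c₂, by ring⟩ ⟨a₂ * c₂, by ring⟩ ⟨a₂ * b₂, by ring⟩)
    (fun _ hg => pow_mem_tripleProdKer hg ⟨b₁ * c₁, by ring⟩ ⟨a₁ * c₁, by ring⟩ ⟨a₁ * b₁, by ring⟩)

theorem nonempty_tripleProdKer_mulEquiv_of_dvd
    (ea : (powMonoidHom a : G →* G).ker ≃* Multiplicative (ZMod a))
    (eb : (powMonoidHom b : G →* G).ker ≃* Multiplicative (ZMod b))
    (ha : 0 < a) (hab : a ∣ b) (hbc : b ∣ c) :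
    Nonempty (tripleProdKer G a b c ≃* invariantGroup a b c) := by
  unfold invariantGroup
  rw [gcd3_mul_of_dvd hab hbc, gcd3_of_dvd hab hbc, Nat.mul_div_cancel_left b ha]
  exact ⟨(tripleProdKerEquivOfDvd (hab.trans hbc) hbc).trans
    ((ea.prodCongr eb).trans (MulEquiv.prodMultiplicative _ _).symm)⟩

theorem nonempty_tripleProdKer_mulEquiv_swap12
    (h : Nonempty (tripleProdKer G b a c ≃* invariantGroup b a c)) :
    Nonempty (tripleProdKer G a b c ≃* invariantGroup a b c) := by
  unfold invariantGroup at h ⊢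
  rw [gcd3_comm12 a b c, gcd3_comm12 (b * c), mul_comm b a] at h
  exact h.map (tripleProdKerSwap12 a b c).trans

theorem nonempty_tripleProdKer_mulEquiv_swap23
    (h : Nonempty (tripleProdKer G a c b ≃* invariantGroup a c b)) :
    Nonempty (tripleProdKer G a b c ≃* invariantGroup a b c) := by
  unfold invariantGroup at h ⊢
  rw [gcd3_comm23 a b c, gcd3_comm23 (c * b), mul_comm c b] at h
  exact h.map (tripleProdKerSwap23 a b c).trans

theorem nonempty_tripleProdKer_mulEquiv_prime_pow {N : ℕ} (hN : N ≠ 0)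
    (hμ : ∀ n, n ∣ N → Nonempty ((powMonoidHom n : G →* G).ker ≃* Multiplicative (ZMod n)))
    (p i j l : ℕ) (h : p ^ i * p ^ j * p ^ l ∣ N) :
    Nonempty
      (tripleProdKer G (p ^ i) (p ^ j) (p ^ l) ≃* invariantGroup (p ^ i) (p ^ j) (p ^ l)) := by
  refine of_sorted₃ (P := fun i j l => p ^ i * p ^ j * p ^ l ∣ N → Nonempty
    (tripleProdKer G (p ^ i) (p ^ j) (p ^ l) ≃* invariantGroup (p ^ i) (p ^ j) (p ^ l)))
    ?_ ?_ ?_ i j l h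
  · exact fun hP h => nonempty_tripleProdKer_mulEquiv_swap12 (hP (by rwa [mul_comm (p ^ _)]))
  · exact fun hP h => nonempty_tripleProdKer_mulEquiv_swap23 (hP (by rwa [mul_right_comm]))
  · intro i j l hij hjl h
    have hi : p ^ i ∣ N := (dvd_mul_right _ _).trans ((dvd_mul_right _ _).trans h)
    obtain ⟨ea⟩ := hμ _ hi
    obtain ⟨eb⟩ := hμ _ ((dvd_mul_left _ _).trans ((dvd_mul_right _ _).trans h))
    exact nonempty_tripleProdKer_mulEquiv_of_dvd ea eb
      (Nat.pos_of_ne_zero (ne_zero_of_dvd_ne_zero hN hi)) (pow_dvd_pow p hij) (pow_dvd_pow p hjl)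

theorem nonempty_tripleProdKer_mulEquiv {N : ℕ} (hN : N ≠ 0)
    (hμ : ∀ n, n ∣ N → Nonempty ((powMonoidHom n : G →* G).ker ≃* Multiplicative (ZMod n)))
    (h : a * b * c ∣ N) :
    Nonempty (tripleProdKer G a b c ≃* invariantGroup a b c) := by
  refine Nat.triple_induction_on_prime_pow_coprime (P := fun a b c => a * b * c ∣ N →
    Nonempty (tripleProdKer G a b c ≃* invariantGroup a b c)) ?_ ?_ (ne_zero_of_dvd_ne_zero hN h) h
  · exact fun p i j l _ => nonempty_tripleProdKer_mulEquiv_prime_pow hN hμ p i j l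
  · intro a₁ b₁ c₁ a₂ b₂ c₂ hcop h₁ h₂ h
    obtain ⟨e₁⟩ := h₁ ((mul_dvd_mul (mul_dvd_mul (dvd_mul_right a₁ a₂) (dvd_mul_right b₁ b₂))
      (dvd_mul_right c₁ c₂)).trans h)
    obtain ⟨e₂⟩ := h₂ ((mul_dvd_mul (mul_dvd_mul (dvd_mul_left a₂ a₁) (dvd_mul_left b₂ b₁))
      (dvd_mul_left c₂ c₁)).trans h)
    obtain ⟨f⟩ := invariantGroup_mul hcop
    exact ⟨(tripleProdKerMulEquivOfCoprime hcop).symm.trans ((e₁.prodCongr e₂).trans f)⟩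

end TripleProdKer

theorem nonempty_ker_powMonoidHom_mulEquiv_zmod (M : Type*) [CommMonoid M] (n : ℕ) [NeZero n]
    [HasEnoughRootsOfUnity M n] :
    Nonempty ((powMonoidHom n : Mˣ →* Mˣ).ker ≃* Multiplicative (ZMod n)) := by
  rw [← rootsOfUnity_eq_ker]
  exact ⟨mulEquivOfCyclicCardEq <| by
    rw [HasEnoughRootsOfUnity.natCard_rootsOfUnity, Nat.card_congr Multiplicative.toAdd,
      Nat.card_zmod]⟩

theorem kernel_of_mu_product_general (k : Type*) [Field k] [IsAlgClosed k]
    (a b c : ℕ) (hchar : ((a * b * c : ℕ) : k) ≠ 0) :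
    Nonempty
      ((((mu k a).prod ((mu k b).prod (mu k c))) ⊓ (tripleProdHom kˣ).ker :
          Subgroup (kˣ × kˣ × kˣ)) ≃*
        Multiplicative (ZMod (Nat.gcd a (Nat.gcd b c)) ×
          ZMod (Nat.gcd (b * c) (Nat.gcd (a * c) (a * b)) / Nat.gcd a (Nat.gcd b c)))) := by
  refine nonempty_tripleProdKer_mulEquiv (fun h => hchar (by rw [h, Nat.cast_zero]))
    (fun n hn => ?_) dvd_rfl
  obtain ⟨t, ht⟩ := hn
  have : NeZero (n : k) := ⟨left_ne_zero_of_mul (by rwa [ht, Nat.cast_mul] at hchar)⟩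
  have : NeZero n := NeZero.of_map (Nat.castRingHom k)
  have := IsSepClosed.hasEnoughRootsOfUnity k n
  exact nonempty_ker_powMonoidHom_mulEquiv_zmod k n

/-- Over an algebraically closed field of characteristic coprime to `abc`, the kernel `K`
of the multiplication map `μ_a × μ_b × μ_c → μ_{lcm(a,b,c)}`, `(ξ₀,ξ₁,ξ∞) ↦ ξ₀ξ₁ξ∞`, is
isomorphic to `ℤ/d × ℤ/(m/d)`, where `d = gcd(a,b,c)` and `m = gcd(bc,ac,ab)`. -/
theorem kernel_of_mu_product (k : Type*) [Field k] [IsAlgClosed k]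
    (a b c : ℕ) (ha : 0 < a) (hb : 0 < b) (hc : 0 < c)
    (hchar : ((a * b * c : ℕ) : k) ≠ 0) :
    Nonempty
      ((((mu k a).prod ((mu k b).prod (mu k c))) ⊓ (tripleProdHom kˣ).ker :
          Subgroup (kˣ × kˣ × kˣ)) ≃*
        Multiplicative (ZMod (Nat.gcd a (Nat.gcd b c)) ×
          ZMod (Nat.gcd (b * c) (Nat.gcd (a * c) (a * b)) / Nat.gcd a (Nat.gcd b c)))) :=
  kernel_of_mu_product_general k a b c hchar
end
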